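/- arXiv:1607.00519 — 5 statements merged into one kernel-verified Lean document; each statement's English description precedes it below -/
import Mathlib

section
/- Let μ₁ and μ₂ be finite Borel measures on ℝⁿ with μ₁(ℝⁿ) = μ₂(ℝⁿ). Then μ₁(K) ≥ μ₂(K) for all symmetric convex bodies K if and only if ∫ F dμ₁ ≥ ∫ F dμ₂ for all even, non-negative, quasi-concave functions F: ℝⁿ → ℝ. -/
/-!
(⇐) Indicators of symmetric convex bodies are admissible test functions.
(⇒) By the layer-cake formula `∫ F dμ = ∫₀^∞ μ {F > t} dt`, and every superlevel set
`{F > t}` is symmetric and convex, so it suffices to compare `μ₁` and `μ₂` on measurable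
symmetric convex sets.
Such a set is exhausted from inside (inner regularity) by symmetric convex hulls of compact subsets,
which are compact by Carathéodory's theorem, and a compact symmetric convex set is approximated
from outside by its closed `δ`-thickenings, which are symmetric convex bodies.
-/

open MeasureTheory Metric Set Function

theorem Function.Injective.sum_extend_zero {ι κ M : Type*} [Fintype ι] [Fintype κ]
    [AddCommMonoid M] {g : ι → κ} (hg : Injective g) (f : ι → M) :
    ∑ j, extend g f 0 j = ∑ i, f i := by
  classical
  calc ∑ j, extend g f 0 j = ∑ j ∈ Finset.univ.map ⟨g, hg⟩, extend g f 0 j :=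
        (Finset.sum_subset (Finset.subset_univ _) fun j _ hj =>
          extend_apply' (f := g) f 0 j (by simpa using hj)).symm
    _ = ∑ i, f i := by simp [hg.extend_apply]

section ConvexHull

variable {E : Type*} [NormedAddCommGroup E] [NormedSpace ℝ E] [FiniteDimensional ℝ E]

/-- Carathéodory's theorem, padded with zero weights to exactly `finrank ℝ E + 1` points. -/
theorem exists_stdSimplex_of_mem_convexHull {s : Set E} {x₀ x : E} (hx₀ : x₀ ∈ s)
    (hx : x ∈ convexHull ℝ s) :
    ∃ w ∈ stdSimplex ℝ (Fin (Module.finrank ℝ E + 1)), ∃ z ∈ univ.pi fun _ ↦ s,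
      ∑ i, w i • z i = x := by
  obtain ⟨ι, _, z, w, hzs, hind, hwpos, hwsum, rfl⟩ := eq_pos_convex_span_of_mem_convexHull hx
  obtain ⟨g⟩ : Nonempty (ι ↪ Fin (Module.finrank ℝ E + 1)) :=
    Function.Embedding.nonempty_of_card_le <| by
      simpa using hind.card_le_finrank_succ.trans (Nat.add_le_add_right (Submodule.finrank_le _) 1)
  have hg := g.injective
  have mem_range_or : ∀ j, (∃ i, g i = j) ∨ ¬∃ i, g i = j := fun j => em _
  refine ⟨extend g w 0, ⟨fun j => ?_, by rw [hg.sum_extend_zero, hwsum]⟩,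
    extend g z fun _ => x₀, fun j _ => ?_, ?_⟩
  · rcases mem_range_or j with ⟨i, rfl⟩ | hj
    · simpa [hg.extend_apply] using (hwpos i).le
    · simp [extend_apply' _ _ _ hj]
  · rcases mem_range_or j with ⟨i, rfl⟩ | hj
    · simpa [hg.extend_apply] using hzs (mem_range_self i)
    · simpa [extend_apply' _ _ _ hj] using hx₀
  · rw [← hg.sum_extend_zero]
    refine Finset.sum_congr rfl fun j _ => ?_
    rcases mem_range_or j with ⟨i, rfl⟩ | hj
    · simp [hg.extend_apply]
    · simp [extend_apply' _ _ _ hj]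

theorem IsCompact.convexHull {s : Set E} (hs : IsCompact s) : IsCompact (convexHull ℝ s) := by
  rcases s.eq_empty_or_nonempty with rfl | ⟨x₀, hx₀⟩
  · simp
  have hull_eq : _root_.convexHull ℝ s = (fun p ↦ ∑ i, p.1 i • p.2 i) ''
      (stdSimplex ℝ (Fin (Module.finrank ℝ E + 1)) ×ˢ univ.pi fun _ ↦ s) := by
    refine Subset.antisymm (fun x hx => ?_) ?_
    · obtain ⟨w, hw, z, hz, rfl⟩ := exists_stdSimplex_of_mem_convexHull hx₀ hx
      exact ⟨(w, z), ⟨hw, hz⟩, rfl⟩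
    · rintro _ ⟨⟨w, z⟩, ⟨hw, hz⟩, rfl⟩
      exact (convex_convexHull ℝ s).sum_mem (fun i _ => hw.1 i) hw.2
        fun i _ => subset_convexHull ℝ s (hz i (mem_univ i))
  rw [hull_eq]
  exact ((isCompact_stdSimplex _ _).prod (isCompact_univ_pi fun _ => hs)).image (by fun_prop)

end ConvexHull

section SymmetricConvexBody

variable {E : Type*} [NormedAddCommGroup E] [NormedSpace ℝ E]

structure IsSymmetricConvexBody (K : Set E) : Prop where
  isCompact : IsCompact K
  convex : Convex ℝ K
  interior_nonempty : (interior K).Nonempty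
  neg_eq : K = -K

theorem isSymmetricConvexBody_cthickening [ProperSpace E] {T : Set E} (hTc : IsCompact T)
    (hTconv : Convex ℝ T) (hTneg : T = -T) (hTne : T.Nonempty) {δ : ℝ} (hδ : 0 < δ) :
    IsSymmetricConvexBody (cthickening δ T) where
  isCompact := hTc.cthickening
  convex := hTconv.cthickening δ
  interior_nonempty := hTne.mono <| (self_subset_thickening hδ T).trans <|
    interior_maximal (thickening_subset_cthickening δ T) isOpen_thickening
  neg_eq := by rw [neg_cthickening, ← hTneg]

variable [MeasurableSpace E] {μ₁ μ₂ : Measure E}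

theorem measure_le_of_isCompact_of_convex [ProperSpace E] [OpensMeasurableSpace E]
    [IsFiniteMeasure μ₁] (h : ∀ K, IsSymmetricConvexBody K → μ₂ K ≤ μ₁ K) {T : Set E}
    (hTc : IsCompact T) (hTconv : Convex ℝ T) (hTneg : T = -T) : μ₂ T ≤ μ₁ T := by
  rcases T.eq_empty_or_nonempty with rfl | hTne
  · simp
  have tendsto_cthickening : Filter.Tendsto (fun δ ↦ μ₁ (cthickening δ T))
      (nhdsWithin 0 (Ioi 0)) (nhds (μ₁ T)) :=
    (tendsto_measure_cthickening_of_isClosed ⟨1, one_pos, measure_ne_top μ₁ _⟩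
      hTc.isClosed).mono_left nhdsWithin_le_nhds
  refine ge_of_tendsto tendsto_cthickening ?_
  filter_upwards [self_mem_nhdsWithin] with δ (hδ : 0 < δ)
  exact (measure_mono (self_subset_cthickening T)).trans
    (h _ (isSymmetricConvexBody_cthickening hTc hTconv hTneg hTne hδ))

theorem measure_le_of_measurableSet_of_convex [FiniteDimensional ℝ E] [BorelSpace E]
    [IsFiniteMeasure μ₁] [IsFiniteMeasure μ₂]
    (h : ∀ K, IsSymmetricConvexBody K → μ₂ K ≤ μ₁ K) {C : Set E} (hCm : MeasurableSet C)
    (hCconv : Convex ℝ C) (hCneg : C = -C) :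
    μ₂ C ≤ μ₁ C := by
  rw [hCm.measure_eq_iSup_isCompact_of_ne_top (measure_ne_top μ₂ C)]
  refine iSup₂_le fun K hKC => iSup_le fun hK => ?_
  have hKC' : K ∪ -K ⊆ C := union_subset hKC (by rw [hCneg]; exact neg_subset_neg.mpr hKC)
  have hull_neg : convexHull ℝ (K ∪ -K) = -convexHull ℝ (K ∪ -K) := by
    rw [← convexHull_neg, union_neg, neg_neg, union_comm]
  calc μ₂ K ≤ μ₂ (convexHull ℝ (K ∪ -K)) :=
        measure_mono (subset_union_left.trans (subset_convexHull ℝ _))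
    _ ≤ μ₁ (convexHull ℝ (K ∪ -K)) :=
        measure_le_of_isCompact_of_convex h (hK.union hK.neg).convexHull
          (convex_convexHull ℝ _) hull_neg
    _ ≤ μ₁ C := measure_mono (convexHull_min hKC' hCconv)

end SymmetricConvexBody

theorem integral_le_integral_of_forall_measure_lt_le {α : Type*} [MeasurableSpace α]
    {μ₁ μ₂ : Measure α} {F : α → ℝ} (hFm : Measurable F) (hFnn : ∀ x, 0 ≤ F x)
    (hF₁ : Integrable F μ₁) (h : ∀ t, μ₂ {x | t < F x} ≤ μ₁ {x | t < F x}) :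
    ∫ x, F x ∂μ₂ ≤ ∫ x, F x ∂μ₁ := by
  have hFnn' : ∀ μ : Measure α, 0 ≤ᵐ[μ] F := fun _ => Filter.Eventually.of_forall hFnn
  rw [integral_eq_lintegral_of_nonneg_ae (hFnn' μ₂) hFm.aestronglyMeasurable,
    integral_eq_lintegral_of_nonneg_ae (hFnn' μ₁) hFm.aestronglyMeasurable,
    lintegral_eq_lintegral_meas_lt μ₂ (hFnn' μ₂) hFm.aemeasurable,
    lintegral_eq_lintegral_meas_lt μ₁ (hFnn' μ₁) hFm.aemeasurable]
  refine ENNReal.toReal_mono ?_ (lintegral_mono h)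
  rw [← lintegral_eq_lintegral_meas_lt μ₁ (hFnn' μ₁) hFm.aemeasurable]
  exact hF₁.lintegral_lt_top.ne

theorem indicator_one_neg {E : Type*} [InvolutiveNeg E] {C : Set E} (hC : C = -C) (x : E) :
    C.indicator (1 : E → ℝ) (-x) = C.indicator 1 x := by
  have hmem : -x ∈ C ↔ x ∈ C := by rw [← mem_neg, ← hC]
  by_cases hx : x ∈ C <;> simp [hx, hmem]

theorem Convex.convex_setOf_lt_indicator_one {𝕜 E : Type*} [Semiring 𝕜] [PartialOrder 𝕜]
    [AddCommMonoid E] [Module 𝕜 E] {C : Set E} (hC : Convex 𝕜 C) (s : ℝ) :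
    Convex 𝕜 {x | s < C.indicator (1 : E → ℝ) x} := by
  rcases lt_or_ge s 0 with hs₀ | hs₀
  · convert convex_univ
    exact eq_univ_of_forall fun x => hs₀.trans_le (indicator_nonneg (fun _ _ => zero_le_one) x)
  rcases lt_or_ge s 1 with hs₁ | hs₁
  · convert hC
    ext x
    by_cases hx : x ∈ C <;> simp [hx, hs₁, hs₀.not_gt]
  · convert convex_empty
    ext x
    by_cases hx : x ∈ C <;> simp [hx, hs₁.not_gt, (zero_le_one.trans hs₁).not_gt]

theorem stmt0_general (n : ℕ) (μ₁ μ₂ : Measure (EuclideanSpace ℝ (Fin n)))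
    [IsFiniteMeasure μ₁] [IsFiniteMeasure μ₂] :
    (∀ K : Set (EuclideanSpace ℝ (Fin n)), IsCompact K → Convex ℝ K →
        (interior K).Nonempty → K = -K → μ₂ K ≤ μ₁ K) ↔
    (∀ F : EuclideanSpace ℝ (Fin n) → ℝ, Measurable F → (∀ x, 0 ≤ F x) →
        (∀ x, F (-x) = F x) → (∀ s : ℝ, Convex ℝ {x | s < F x}) →
        Integrable F μ₁ → Integrable F μ₂ →
        ∫ x, F x ∂μ₂ ≤ ∫ x, F x ∂μ₁) := by
  refine ⟨fun h F hFm hFnn hFeven hFconv hF₁ _ => ?_, fun h K hKc hKconv _ hKneg => ?_⟩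
  · refine integral_le_integral_of_forall_measure_lt_le hFm hFnn hF₁ fun t => ?_
    refine measure_le_of_measurableSet_of_convex
      (fun K hK => h K hK.isCompact hK.convex hK.interior_nonempty hK.neg_eq)
      (measurableSet_lt measurable_const hFm) (hFconv t) ?_
    ext x
    simp [hFeven]
  · have hKm : MeasurableSet K := hKc.isClosed.measurableSet
    have := h (K.indicator 1) (measurable_one.indicator hKm)
      (indicator_nonneg fun _ _ => zero_le_one) (indicator_one_neg hKneg)
      hKconv.convex_setOf_lt_indicator_one ((integrable_const _).indicator hKm)
      ((integrable_const _).indicator hKm)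
    rwa [integral_indicator_one hKm, integral_indicator_one hKm, measureReal_def, measureReal_def,
      ENNReal.toReal_le_toReal (by finiteness) (by finiteness)] at this

theorem stmt0 (n : ℕ) (μ₁ μ₂ : Measure (EuclideanSpace ℝ (Fin n)))
    [IsFiniteMeasure μ₁] [IsFiniteMeasure μ₂]
    (hmass : μ₁ Set.univ = μ₂ Set.univ) :
    (∀ K : Set (EuclideanSpace ℝ (Fin n)), IsCompact K → Convex ℝ K →
        (interior K).Nonempty → K = -K → μ₂ K ≤ μ₁ K) ↔
    (∀ F : EuclideanSpace ℝ (Fin n) → ℝ, Measurable F → (∀ x, 0 ≤ F x) →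
        (∀ x, F (-x) = F x) → (∀ s : ℝ, Convex ℝ {x | s < F x}) →
        Integrable F μ₁ → Integrable F μ₂ →
        ∫ x, F x ∂μ₂ ≤ ∫ x, F x ∂μ₁) :=
  stmt0_general n μ₁ μ₂
end

section
/- Let E be a k-dimensional linear subspace of ℝⁿ and let μ, ν be finite Borel measures on ℝⁿ with equal total mass such that μ(K) ≥ ν(K) for every symmetric convex body K in ℝⁿ. Then for every symmetric convex body C in E, μ(P_E⁻¹(C)) ≥ ν(P_E⁻¹(C)), i.e., the marginal of μ on E is more peaked than the marginal of ν on E. -/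
open MeasureTheory Metric

/-! A cylinder `P_E⁻¹ C` over a symmetric convex body `C ⊆ E` is closed, convex, symmetric and has
nonempty interior, but is unbounded. Its intersections with the balls of radius `m` are symmetric
convex bodies once `m` is large, and they exhaust the cylinder, so the inequality passes to it by
continuity of measures along increasing unions. -/

structure IsSymmConvexBody {V : Type*} [TopologicalSpace V] [AddCommGroup V] [Module ℝ V]
    (K : Set V) : Prop where
  isCompact : IsCompact K
  convex : Convex ℝ K
  interior_nonempty : (interior K).Nonempty
  neg_eq : K = -K

section Truncation

variable {V : Type*} [NormedAddCommGroup V] [NormedSpace ℝ V] [ProperSpace V]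

theorem isSymmConvexBody_inter_closedBall {S : Set V} (hS : IsClosed S) (hconv : Convex ℝ S)
    (hsymm : S = -S) {x : V} (hx : x ∈ interior S) {r : ℝ} (hr : ‖x‖ < r) :
    IsSymmConvexBody (S ∩ closedBall 0 r) where
  isCompact := (isCompact_closedBall 0 r).inter_left hS
  convex := hconv.inter (convex_closedBall 0 r)
  interior_nonempty := by
    refine ⟨x, ?_⟩
    rw [interior_inter]
    exact ⟨hx, ball_subset_interior_closedBall (mem_ball_zero_iff.mpr hr)⟩
  neg_eq := by rw [Set.inter_neg, ← hsymm, neg_closedBall, neg_zero]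

theorem measure_le_of_forall_isSymmConvexBody [MeasurableSpace V] {μ ν : Measure V}
    (h : ∀ K : Set V, IsSymmConvexBody K → ν K ≤ μ K) {S : Set V} (hS : IsClosed S)
    (hconv : Convex ℝ S) (hint : (interior S).Nonempty) (hsymm : S = -S) : ν S ≤ μ S := by
  obtain ⟨x, hx⟩ := hint
  have hexhaust : ν S = ⨆ m : ℕ, ν (S ∩ closedBall 0 m) := by
    rw [← Monotone.measure_iUnion, ← Set.inter_iUnion, iUnion_closedBall_nat, Set.inter_univ]
    exact fun a b hab => Set.inter_subset_inter_right S
      (closedBall_subset_closedBall (Nat.cast_le.mpr hab))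
  rw [hexhaust]
  refine iSup_le fun m => ?_
  have hr : ‖x‖ < m + ‖x‖ + 1 := by linarith [(Nat.cast_nonneg m : (0 : ℝ) ≤ m)]
  calc ν (S ∩ closedBall 0 m) ≤ ν (S ∩ closedBall 0 (m + ‖x‖ + 1)) :=
        measure_mono (Set.inter_subset_inter_right S
          (closedBall_subset_closedBall (by linarith [norm_nonneg x])))
    _ ≤ μ (S ∩ closedBall 0 (m + ‖x‖ + 1)) :=
        h _ (isSymmConvexBody_inter_closedBall hS hconv hsymm hx hr)
    _ ≤ μ S := measure_mono Set.inter_subset_left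

end Truncation

section Preimage

variable {V W : Type*} [TopologicalSpace V] [AddCommGroup V] [Module ℝ V]
  [TopologicalSpace W] [AddCommGroup W] [Module ℝ W]

theorem interior_preimage_nonempty_of_surjective {f : V →L[ℝ] W} (hf : Function.Surjective f)
    {C : Set W} (hC : (interior C).Nonempty) : (interior (f ⁻¹' C)).Nonempty := by
  obtain ⟨c, hc⟩ := hC
  obtain ⟨x, rfl⟩ := hf c
  exact ⟨x, preimage_interior_subset_interior_preimage f.continuous hc⟩

theorem preimage_neg_eq (f : V →L[ℝ] W) {C : Set W} (hsymm : C = -C) :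
    f ⁻¹' C = -(f ⁻¹' C) := by
  ext x
  conv_lhs => rw [hsymm]
  simp only [Set.mem_preimage, Set.mem_neg, map_neg]

end Preimage

theorem stmt2_general (n : ℕ) (E : Submodule ℝ (EuclideanSpace ℝ (Fin n)))
    (μ ν : Measure (EuclideanSpace ℝ (Fin n)))
    (hpeak : ∀ K : Set (EuclideanSpace ℝ (Fin n)), IsCompact K → Convex ℝ K →
      (interior K).Nonempty → K = -K → ν K ≤ μ K) :
    ∀ C : Set E, IsCompact C → Convex ℝ C → (interior C).Nonempty → C = -C →
      ν ((Submodule.orthogonalProjectionOnto E) ⁻¹' C) ≤ μ ((Submodule.orthogonalProjectionOnto E) ⁻¹' C) := by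
  intro C hC hconv hint hsymm
  set P := Submodule.orthogonalProjectionOnto E
  have hP : Function.Surjective P := fun c =>
    ⟨c, Submodule.orthogonalProjectionOnto_mem_subspace_eq_self c⟩
  exact measure_le_of_forall_isSymmConvexBody
    (fun K hK => hpeak K hK.isCompact hK.convex hK.interior_nonempty hK.neg_eq)
    (hC.isClosed.preimage P.continuous) (hconv.linear_preimage P.toLinearMap)
    (interior_preimage_nonempty_of_surjective hP hint) (preimage_neg_eq P hsymm)

theorem stmt2 (n k : ℕ) (E : Submodule ℝ (EuclideanSpace ℝ (Fin n)))
    (hE : Module.finrank ℝ E = k)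
    (μ ν : Measure (EuclideanSpace ℝ (Fin n))) [IsFiniteMeasure μ] [IsFiniteMeasure ν]
    (hmass : μ Set.univ = ν Set.univ)
    (hpeak : ∀ K : Set (EuclideanSpace ℝ (Fin n)), IsCompact K → Convex ℝ K →
      (interior K).Nonempty → K = -K → ν K ≤ μ K) :
    ∀ C : Set E, IsCompact C → Convex ℝ C → (interior C).Nonempty → C = -C →
      ν ((Submodule.orthogonalProjectionOnto E) ⁻¹' C) ≤ μ ((Submodule.orthogonalProjectionOnto E) ⁻¹' C) :=
  stmt2_general n E μ ν hpeak
end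

section
/- Let f: ℝⁿ → [0,∞) be rotationally invariant with ∫_{ℝⁿ} f = 1 and ‖f‖_∞ ≤ 1. Then for every star-shaped set K ⊆ ℝⁿ (compact, containing the origin in its interior, and with λx ∈ K whenever x ∈ K and λ ∈ [0,1]), ∫_K f(x) dx ≤ Vol(K ∩ B̃), where B̃ is the Euclidean ball of volume 1 centered at the origin. -/
/-!
In polar coordinates `x = r • θ` Lebesgue measure becomes `σ ⊗ ν`, with `σ` a measure on the
unit sphere and `ν = r ^ (n - 1) dr`. A radial density `f = g(‖x‖)` has the same profile `g` on
every ray, and the normalisation `∫ f = Vol B̃` reads `∫ g dν = ν (0, R]`. On a ray, a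
star-shaped `K` cuts out an initial segment `S` of `(0, ∞)`. Either `S ⊆ (0, R]`, and then
`g ≤ 1` gives `∫_S g dν ≤ ν S = ν (S ∩ (0, R])`, or `(0, R] ⊆ S`, and then
`∫_S g dν ≤ ∫ g dν = ν (S ∩ (0, R])`. Integrating over `θ` gives the theorem.
-/

open MeasureTheory Metric Set Module
open scoped ENNReal

theorem setLIntegral_le_measure_inter_of_isLowerSet {α : Type*} [LinearOrder α]
    [MeasurableSpace α] {ν : Measure α} {S T : Set α} (hS : IsLowerSet S) (hT : IsLowerSet T)
    {g : α → ℝ≥0∞} (hg : g ≤ 1) (hgT : ∫⁻ r, g r ∂ν = ν T) :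
    ∫⁻ r in S, g r ∂ν ≤ ν (S ∩ T) := by
  rcases hS.total hT with hST | hTS
  · calc ∫⁻ r in S, g r ∂ν ≤ ∫⁻ _ in S, 1 ∂ν := lintegral_mono hg
      _ = ν (S ∩ T) := by rw [setLIntegral_one, inter_eq_left.2 hST]
  · calc ∫⁻ r in S, g r ∂ν ≤ ∫⁻ r, g r ∂ν := setLIntegral_le_lintegral S g
      _ = ν (S ∩ T) := by rw [hgT, inter_eq_right.2 hTS]

theorem StarConvex.isLowerSet_preimage_smul {E : Type*} [AddCommGroup E] [Module ℝ E]
    {K : Set E} (hK : StarConvex ℝ 0 K) (v : E) :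
    IsLowerSet ((fun r : Ioi (0 : ℝ) => (r : ℝ) • v) ⁻¹' K) := fun r s hsr hr => by
  have := hK.smul_mem hr (div_nonneg s.2.le r.2.le) (div_le_one_of_le₀ hsr r.2.le)
  rwa [smul_smul, div_mul_cancel₀ _ r.2.ne'] at this

theorem norm_smul_coe_sphere {E : Type*} [NormedAddCommGroup E] [NormedSpace ℝ E]
    (r : Ioi (0 : ℝ)) (θ : sphere (0 : E) 1) : ‖(r : ℝ) • (θ : E)‖ = r := by
  rw [norm_smul, mem_sphere_zero_iff_norm.1 θ.2, mul_one, Real.norm_of_nonneg r.2.le]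

namespace MeasureTheory.Measure

variable {E : Type*} [NormedAddCommGroup E] [NormedSpace ℝ E] [FiniteDimensional ℝ E]
  [MeasurableSpace E] [BorelSpace E] [Nontrivial E] (μ : Measure E) [μ.IsAddHaarMeasure]

theorem lintegral_eq_lintegral_toSphere_volumeIoiPow {F : E → ℝ≥0∞} (hF : Measurable F) :
    ∫⁻ x, F x ∂μ =
      ∫⁻ θ, ∫⁻ r, F ((r : ℝ) • (θ : E)) ∂volumeIoiPow (finrank ℝ E - 1) ∂μ.toSphere := by
  have hF' : Measurable fun p : sphere (0 : E) 1 × Ioi (0 : ℝ) => F ((p.2 : ℝ) • (p.1 : E)) :=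
    hF.comp (by fun_prop)
  calc ∫⁻ x, F x ∂μ = ∫⁻ x : ({0}ᶜ : Set E), F x ∂μ.comap (↑) := by
        rw [lintegral_subtype_comap (measurableSet_singleton 0).compl, restrict_compl_singleton]
    _ = ∫⁻ p, F ((p.2 : ℝ) • (p.1 : E)) ∂(μ.toSphere.prod (volumeIoiPow (finrank ℝ E - 1))) := by
        rw [← μ.measurePreserving_homeomorphUnitSphereProd.lintegral_comp_emb
          (homeomorphUnitSphereProd E).measurableEmbedding]
        refine lintegral_congr fun x => ?_
        have hx : (x : E) ≠ 0 := x.2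
        simp only [homeomorphUnitSphereProd_apply_snd_coe, homeomorphUnitSphereProd_apply_fst_coe,
          smul_smul, mul_inv_cancel₀ (norm_ne_zero_iff.2 hx), one_smul]
    _ = _ := lintegral_prod _ hF'.aemeasurable

theorem lintegral_comp_norm_eq_toSphere_mul {G : ℝ → ℝ≥0∞} (hG : Measurable G) :
    ∫⁻ x, G ‖x‖ ∂μ =
      μ.toSphere univ * ∫⁻ r : Ioi (0 : ℝ), G r ∂volumeIoiPow (finrank ℝ E - 1) := by
  rw [lintegral_eq_lintegral_toSphere_volumeIoiPow μ (by fun_prop)]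
  simp only [norm_smul_coe_sphere, lintegral_const, mul_comm]

theorem lintegral_Ioi_eq_volumeIoiPow_Iic_of_lintegral_comp_norm {G : ℝ → ℝ≥0∞}
    (hG : Measurable G) {R : ℝ} (hGR : ∫⁻ x, G ‖x‖ ∂μ = μ (closedBall 0 R)) :
    ∫⁻ r : Ioi (0 : ℝ), G r ∂volumeIoiPow (finrank ℝ E - 1) =
      volumeIoiPow (finrank ℝ E - 1) (Subtype.val ⁻¹' Iic R) := by
  have hball : μ (closedBall 0 R) = ∫⁻ x, (Iic R).indicator 1 ‖x‖ ∂μ := by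
    have : closedBall (0 : E) R = norm ⁻¹' Iic R := by ext; simp
    rw [this, ← lintegral_indicator_one (measurableSet_Iic.preimage measurable_norm)]
    rfl
  rw [hball, lintegral_comp_norm_eq_toSphere_mul μ hG,
    lintegral_comp_norm_eq_toSphere_mul μ (measurable_one.indicator measurableSet_Iic),
    ENNReal.mul_right_inj (measure_univ_ne_zero.2 μ.toSphere_ne_zero) (measure_ne_top _ _)] at hGR
  rw [hGR, ← lintegral_indicator_one (measurableSet_Iic.preimage measurable_subtype_coe)]
  rfl

theorem setLIntegral_comp_norm_le_measure_inter_closedBall {G : ℝ → ℝ≥0∞} (hG : Measurable G)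
    (hG1 : G ≤ 1) {R : ℝ} (hGR : ∫⁻ x, G ‖x‖ ∂μ = μ (closedBall 0 R)) {K : Set E}
    (hKm : MeasurableSet K) (hK : StarConvex ℝ 0 K) :
    ∫⁻ x in K, G ‖x‖ ∂μ ≤ μ (K ∩ closedBall 0 R) := by
  set ν := volumeIoiPow (finrank ℝ E - 1)
  let ray (θ : sphere (0 : E) 1) (r : Ioi (0 : ℝ)) : E := (r : ℝ) • (θ : E)
  have hray (θ) : Measurable (ray θ) := by fun_prop
  have hball (θ) : ray θ ⁻¹' (K ∩ closedBall 0 R) = ray θ ⁻¹' K ∩ Subtype.val ⁻¹' Iic R := by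
    ext r
    simp [ray, norm_smul_coe_sphere]
  have hGn : Measurable fun x : E => G ‖x‖ := hG.comp measurable_norm
  have hKB : MeasurableSet (K ∩ closedBall 0 R) := hKm.inter measurableSet_closedBall
  rw [← lintegral_indicator hKm, ← lintegral_indicator_one hKB,
    lintegral_eq_lintegral_toSphere_volumeIoiPow μ (hGn.indicator hKm),
    lintegral_eq_lintegral_toSphere_volumeIoiPow μ (measurable_one.indicator hKB)]
  refine lintegral_mono fun θ => ?_
  have hgray (r) :
      K.indicator (fun x => G ‖x‖) (ray θ r) = (ray θ ⁻¹' K).indicator (G ∘ (↑)) r := by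
    rw [← indicator_comp_right]
    simp only [Function.comp_def, ray, norm_smul_coe_sphere]
  calc ∫⁻ r, K.indicator (fun x => G ‖x‖) (ray θ r) ∂ν
      = ∫⁻ r in ray θ ⁻¹' K, G r ∂ν := by
        simp only [hgray, lintegral_indicator (hKm.preimage (hray θ)), Function.comp_apply]
    _ ≤ ν (ray θ ⁻¹' K ∩ Subtype.val ⁻¹' Iic R) :=
        setLIntegral_le_measure_inter_of_isLowerSet (hK.isLowerSet_preimage_smul θ)
          ((isLowerSet_Iic R).preimage (Subtype.mono_coe _)) (fun r => hG1 r)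
          (lintegral_Ioi_eq_volumeIoiPow_Iic_of_lintegral_comp_norm μ hG hGR)
    _ = ∫⁻ r, (K ∩ closedBall 0 R).indicator 1 (ray θ r) ∂ν := by
        rw [← hball, ← lintegral_indicator_one (hKB.preimage (hray θ))]
        rfl

end MeasureTheory.Measure

theorem stmt5_general (n : ℕ) (hn : 1 ≤ n) (f : EuclideanSpace ℝ (Fin n) → ℝ)
    (hmeas : Measurable f) (h0 : ∀ x, 0 ≤ f x)
    (hrot : ∀ x y : EuclideanSpace ℝ (Fin n), ‖x‖ = ‖y‖ → f x = f y)
    (hint : Integrable f) (hint1 : ∫ x, f x = 1) (hbd : ∀ x, f x ≤ 1)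
    (R : ℝ)
    (hRvol : volume (Metric.closedBall (0 : EuclideanSpace ℝ (Fin n)) R) = 1)
    (K : Set (EuclideanSpace ℝ (Fin n))) (hKcpt : IsCompact K)
    (hKstar : ∀ x ∈ K, ∀ l : ℝ, l ∈ Set.Icc (0:ℝ) 1 → l • x ∈ K) :
    ∫ x in K, f x ≤
      (volume (K ∩ Metric.closedBall (0 : EuclideanSpace ℝ (Fin n)) R)).toReal := by
  have : Nonempty (Fin n) := ⟨⟨0, hn⟩⟩
  obtain ⟨e, he⟩ := exists_norm_eq (EuclideanSpace ℝ (Fin n)) zero_le_one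
  set G : ℝ → ℝ≥0∞ := fun r => ENNReal.ofReal (f (r • e))
  have hfG (x : EuclideanSpace ℝ (Fin n)) : ENNReal.ofReal (f x) = G ‖x‖ := by
    rw [hrot x (‖x‖ • e) (by rw [norm_smul, he, mul_one, norm_norm])]
  have hG : Measurable G := (hmeas.comp (by fun_prop)).ennreal_ofReal
  have hGR : ∫⁻ x : EuclideanSpace ℝ (Fin n), G ‖x‖ =
      volume (closedBall (0 : EuclideanSpace ℝ (Fin n)) R) := by
    simp only [← hfG, hRvol, ← ofReal_integral_eq_lintegral_ofReal hint (.of_forall h0), hint1,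
      ENNReal.ofReal_one]
  rw [← ENNReal.ofReal_le_iff_le_toReal
      ((measure_mono inter_subset_right).trans_lt measure_closedBall_lt_top).ne,
    ofReal_integral_eq_lintegral_ofReal hint.restrict (.of_forall h0)]
  simp only [hfG]
  exact volume.setLIntegral_comp_norm_le_measure_inter_closedBall hG
    (fun r => ENNReal.ofReal_le_one.2 (hbd _)) hGR hKcpt.isClosed.measurableSet
    (starConvex_zero_iff.2 fun x hx l hl0 hl1 => hKstar x hx l ⟨hl0, hl1⟩)

theorem stmt5 (n : ℕ) (hn : 1 ≤ n) (f : EuclideanSpace ℝ (Fin n) → ℝ)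
    (hmeas : Measurable f) (h0 : ∀ x, 0 ≤ f x)
    (hrot : ∀ x y : EuclideanSpace ℝ (Fin n), ‖x‖ = ‖y‖ → f x = f y)
    (hint : Integrable f) (hint1 : ∫ x, f x = 1) (hbd : ∀ x, f x ≤ 1)
    (R : ℝ) (hR : 0 < R)
    (hRvol : volume (Metric.closedBall (0 : EuclideanSpace ℝ (Fin n)) R) = 1)
    (K : Set (EuclideanSpace ℝ (Fin n))) (hKcpt : IsCompact K)
    (hK0 : 0 ∈ interior K)
    (hKstar : ∀ x ∈ K, ∀ l : ℝ, l ∈ Set.Icc (0:ℝ) 1 → l • x ∈ K) :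
    ∫ x in K, f x ≤
      (volume (K ∩ Metric.closedBall (0 : EuclideanSpace ℝ (Fin n)) R)).toReal :=
  stmt5_general n hn f hmeas h0 hrot hint hint1 hbd R hRvol K hKcpt hKstar
end

section
/- Let C be a compact convex set in ℝ^N, let θ ∈ S^{n-1} ⊆ ℝⁿ, and let y₁,…,y_N ∈ θ^⊥. For t = (t₁,…,t_N) ∈ ℝ^N, define K_t = [y₁+t₁θ, …, y_N+t_Nθ] C = { Σᵢ cᵢ(yᵢ+tᵢθ) : c ∈ C } ⊆ ℝⁿ. Then the function t ↦ Vol_n(K_t) is convex on ℝ^N and even: Vol_n(K_t) = Vol_n(K_{-t}). -/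
/-! Split `ℝⁿ = ℝθ ⊕ θᗮ`. Up to the constant Jacobian of this splitting, `K_t` is the image
of `C` under `c ↦ (⟪c, t⟫, ∑ cᵢ yᵢ)`, so by Cavalieri its volume is the integral over
`w ∈ θᗮ` of the length of the segment `{⟪c, t⟫ | c ∈ C, ∑ cᵢ yᵢ = w}`. That length is the
width in direction `t` of the compact convex fibre of `C` over `w`, which is convex and even
in `t`. -/

open MeasureTheory Metric Set
open scoped ENNReal NNReal

theorem Convex.volume_eq_ediam_of_isCompact {s : Set ℝ} (hconv : Convex ℝ s) (hs : IsCompact s) :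
    volume s = ediam s := by
  refine (Real.volume_le_diam s).antisymm ?_
  rcases s.eq_empty_or_nonempty with rfl | hne
  · simp
  rw [Real.ediam_eq hs.isBounded, ← Real.volume_Icc]
  exact measure_mono (hconv.ordConnected.out (hs.sInf_mem hne) (hs.sSup_mem hne))

theorem ediam_image_smul_add_smul_le {V E : Type*} [AddCommGroup V] [Module ℝ V]
    [NormedAddCommGroup E] [NormedSpace ℝ E] (f g : V →ₗ[ℝ] E) (s : Set V) {a b : ℝ}
    (ha : 0 ≤ a) (hb : 0 ≤ b) :
    ediam ((a • f + b • g) '' s) ≤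
      ENNReal.ofReal a * ediam (f '' s) + ENNReal.ofReal b * ediam (g '' s) := by
  refine ediam_le ?_
  rintro _ ⟨u, hu, rfl⟩ _ ⟨v, hv, rfl⟩
  have hf := edist_le_ediam_of_mem (mem_image_of_mem f hu) (mem_image_of_mem f hv)
  have hg := edist_le_ediam_of_mem (mem_image_of_mem g hu) (mem_image_of_mem g hv)
  calc edist ((a • f + b • g) u) ((a • f + b • g) v)
      = ‖a • (f u - f v) + b • (g u - g v)‖ₑ := by
        rw [edist_eq_enorm_sub]
        congr 1
        simp only [LinearMap.add_apply, LinearMap.smul_apply]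
        module
    _ ≤ ENNReal.ofReal a * edist (f u) (f v) + ENNReal.ofReal b * edist (g u) (g v) := by
        refine (enorm_add_le _ _).trans_eq ?_
        rw [enorm_smul, enorm_smul, Real.enorm_of_nonneg ha, Real.enorm_of_nonneg hb,
          edist_eq_enorm_sub, edist_eq_enorm_sub]
    _ ≤ _ := by gcongr

theorem convexOn_toReal_of_le_ofReal_mul_add {E : Type*} [AddCommMonoid E] [Module ℝ E] {s : Set E}
    (hs : Convex ℝ s) {f : E → ℝ≥0∞} (hf : ∀ x ∈ s, f x ≠ ∞)
    (h : ∀ x ∈ s, ∀ y ∈ s, ∀ a b : ℝ, 0 ≤ a → 0 ≤ b → a + b = 1 →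
      f (a • x + b • y) ≤ ENNReal.ofReal a * f x + ENNReal.ofReal b * f y) :
    ConvexOn ℝ s fun x => (f x).toReal := by
  refine ⟨hs, fun x hx y hy a b ha hb hab => ?_⟩
  have hle := ENNReal.toReal_mono (by finiteness [hf x hx, hf y hy]) (h x hx y hy a b ha hb hab)
  rwa [ENNReal.toReal_add (by finiteness [hf x hx]) (by finiteness [hf y hy]), ENNReal.toReal_mul,
    ENNReal.toReal_mul, ENNReal.toReal_ofReal ha, ENNReal.toReal_ofReal hb] at hle

theorem preimage_prodMk_image_prod {V W : Type*} [AddCommGroup V] [Module ℝ V] [AddCommGroup W]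
    [Module ℝ W] (C : Set V) (ℓ : V →ₗ[ℝ] ℝ) (Y : V →ₗ[ℝ] W) (w : W) :
    (fun r : ℝ => (r, w)) ⁻¹' (ℓ.prod Y '' C) = ℓ '' (C ∩ Y ⁻¹' {w}) := by
  ext r
  simp [Prod.ext_iff, and_comm, and_assoc]

section Slices

variable {V W : Type*} [NormedAddCommGroup V] [NormedSpace ℝ V] [FiniteDimensional ℝ V]
  [NormedAddCommGroup W] [NormedSpace ℝ W] {C : Set V} (ℓ : V →ₗ[ℝ] ℝ) (Y : V →ₗ[ℝ] W)

theorem volume_preimage_prodMk_image_prod (hC : IsCompact C) (hconv : Convex ℝ C) (w : W) :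
    volume ((fun r : ℝ => (r, w)) ⁻¹' (ℓ.prod Y '' C)) = ediam (ℓ '' (C ∩ Y ⁻¹' {w})) := by
  have hfiber_compact : IsCompact (C ∩ Y ⁻¹' {w}) :=
    hC.inter_right (isClosed_singleton.preimage Y.continuous_of_finiteDimensional)
  rw [preimage_prodMk_image_prod]
  have hfiber_convex : Convex ℝ (C ∩ Y ⁻¹' {w}) :=
    hconv.inter ((convex_singleton w).linear_preimage Y)
  exact (hfiber_convex.linear_image ℓ).volume_eq_ediam_of_isCompact
    (hfiber_compact.image ℓ.continuous_of_finiteDimensional)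

variable [MeasurableSpace W] [BorelSpace W] {ν : Measure W} [SFinite ν]

theorem measure_prod_image_prod_eq_lintegral_ediam (hC : IsCompact C) (hconv : Convex ℝ C) :
    (volume.prod ν) (ℓ.prod Y '' C) = ∫⁻ w, ediam (ℓ '' (C ∩ Y ⁻¹' {w})) ∂ν := by
  rw [Measure.prod_apply_symm (hC.image (ℓ.prod Y).continuous_of_finiteDimensional).measurableSet]
  simp_rw [volume_preimage_prodMk_image_prod ℓ Y hC hconv]

theorem measurable_ediam_image_inter_preimage_singleton (hC : IsCompact C) (hconv : Convex ℝ C) :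
    Measurable fun w => ediam (ℓ '' (C ∩ Y ⁻¹' {w})) := by
  simp_rw [← volume_preimage_prodMk_image_prod ℓ Y hC hconv]
  exact measurable_measure_prodMk_right
    (hC.image (ℓ.prod Y).continuous_of_finiteDimensional).measurableSet

theorem measure_prod_image_prod_smul_add_smul_le (hC : IsCompact C) (hconv : Convex ℝ C)
    (ℓ' : V →ₗ[ℝ] ℝ) {a b : ℝ} (ha : 0 ≤ a) (hb : 0 ≤ b) :
    (volume.prod ν) ((a • ℓ + b • ℓ').prod Y '' C) ≤
      ENNReal.ofReal a * (volume.prod ν) (ℓ.prod Y '' C) +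
        ENNReal.ofReal b * (volume.prod ν) (ℓ'.prod Y '' C) := by
  simp only [measure_prod_image_prod_eq_lintegral_ediam _ Y hC hconv]
  rw [← lintegral_const_mul _ (measurable_ediam_image_inter_preimage_singleton ℓ Y hC hconv),
    ← lintegral_const_mul _ (measurable_ediam_image_inter_preimage_singleton ℓ' Y hC hconv),
    ← lintegral_add_left
      ((measurable_ediam_image_inter_preimage_singleton ℓ Y hC hconv).const_mul _)]
  exact lintegral_mono fun w => ediam_image_smul_add_smul_le ℓ ℓ' _ ha hb

theorem measure_prod_image_prod_neg (hC : IsCompact C) (hconv : Convex ℝ C) :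
    (volume.prod ν) ((-ℓ).prod Y '' C) = (volume.prod ν) (ℓ.prod Y '' C) := by
  have hneg (s : Set ℝ) : ediam (Neg.neg '' s) = ediam s :=
    (IsometryEquiv.neg ℝ).isometry.ediam_image s
  simp only [measure_prod_image_prod_eq_lintegral_ediam _ Y hC hconv, LinearMap.neg_apply,
    ← image_image Neg.neg ℓ, hneg]

theorem convexOn_measure_prod_image_prod [IsFiniteMeasureOnCompacts ν] (hC : IsCompact C)
    (hconv : Convex ℝ C) :
    ConvexOn ℝ univ fun ℓ : V →ₗ[ℝ] ℝ => ((volume.prod ν) (ℓ.prod Y '' C)).toReal :=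
  convexOn_toReal_of_le_ofReal_mul_add convex_univ
    (fun ℓ _ => (hC.image (ℓ.prod Y).continuous_of_finiteDimensional).measure_ne_top)
    fun ℓ _ ℓ' _ _ _ ha hb _ => measure_prod_image_prod_smul_add_smul_le ℓ Y hC hconv ℓ' ha hb

end Slices

theorem ContinuousLinearEquiv.exists_addHaar_image_eq_smul {E F : Type*}
    [NormedAddCommGroup E] [NormedSpace ℝ E] [FiniteDimensional ℝ E] [MeasurableSpace E]
    [BorelSpace E] [NormedAddCommGroup F] [NormedSpace ℝ F] [FiniteDimensional ℝ F]
    [MeasurableSpace F] [BorelSpace F]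
    (μ : Measure E) [μ.IsAddHaarMeasure] (ν : Measure F) [ν.IsAddHaarMeasure] (Φ : F ≃L[ℝ] E) :
    ∃ c : ℝ≥0, ∀ s, μ (Φ '' s) = c * ν s := by
  refine ⟨(μ.map Φ.symm).addHaarScalarFactor ν, fun s => ?_⟩
  calc μ (Φ '' s) = μ.map Φ.symm s :=
        (congrArg μ (Φ.toHomeomorph.image_eq_preimage_symm s)).trans
          (Φ.symm.toHomeomorph.toMeasurableEquiv.map_apply s).symm
    _ = _ := congrArg (· s) (Measure.isAddLeftInvariant_eq_smul (μ.map Φ.symm) ν)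

theorem stmt8_general (n N : ℕ) (C : Set (Fin N → ℝ)) (hCcpt : IsCompact C) (hCconv : Convex ℝ C)
    (θ : EuclideanSpace ℝ (Fin n))
    (y : Fin N → EuclideanSpace ℝ (Fin n)) (hy : ∀ i, inner ℝ (y i) θ = (0:ℝ)) :
    ConvexOn ℝ Set.univ (fun t : Fin N → ℝ =>
      (volume ((fun c : Fin N → ℝ => ∑ i, c i • (y i + t i • θ)) '' C)).toReal) ∧
    ∀ t : Fin N → ℝ,
      (volume ((fun c : Fin N → ℝ => ∑ i, c i • (y i + (-t) i • θ)) '' C)).toReal =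
      (volume ((fun c : Fin N → ℝ => ∑ i, c i • (y i + t i • θ)) '' C)).toReal := by
  rcases eq_or_ne θ 0 with rfl | hθ
  · simpa using convexOn_const _ convex_univ
  let W := (ℝ ∙ θ)ᗮ
  let Y : (Fin N → ℝ) →ₗ[ℝ] W := Fintype.linearCombination ℝ fun i =>
    ⟨y i, Submodule.mem_orthogonal_singleton_iff_inner_left.2 (hy i)⟩
  let ℓ : (Fin N → ℝ) →ₗ[ℝ] (Fin N → ℝ) →ₗ[ℝ] ℝ := Fintype.bilinearCombination ℝ ℝ
  let Φ : (ℝ × W) ≃L[ℝ] EuclideanSpace ℝ (Fin n) :=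
    ((ContinuousLinearEquiv.toSpanNonzeroSingleton ℝ θ hθ).prodCongr
        (ContinuousLinearEquiv.refl ℝ W)).trans
      (Submodule.prodEquivOfIsCompl _ _ (Submodule.isCompl_orthogonal _)).toContinuousLinearEquiv
  have hK (t : Fin N → ℝ) :
      (fun c : Fin N → ℝ => ∑ i, c i • (y i + t i • θ)) '' C = Φ '' ((ℓ t).prod Y '' C) := by
    rw [image_image]
    refine congrArg (· '' C) (funext fun c => ?_)
    simp [Φ, Y, ℓ, Fintype.linearCombination_apply, smul_add, Finset.sum_add_distrib, smul_smul,
      add_comm]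
  obtain ⟨κ, hκ⟩ :=
    Φ.exists_addHaar_image_eq_smul volume ((volume : Measure ℝ).prod (volume : Measure W))
  simp only [hK, hκ, ENNReal.toReal_mul, map_neg, measure_prod_image_prod_neg _ Y hCcpt hCconv]
  exact ⟨((convexOn_measure_prod_image_prod Y hCcpt hCconv).comp_linearMap ℓ).smul κ.2,
    fun _ => trivial⟩

theorem stmt8 (n N : ℕ) (C : Set (Fin N → ℝ)) (hCcpt : IsCompact C) (hCconv : Convex ℝ C)
    (θ : EuclideanSpace ℝ (Fin n)) (hθ : ‖θ‖ = 1)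
    (y : Fin N → EuclideanSpace ℝ (Fin n)) (hy : ∀ i, inner ℝ (y i) θ = (0:ℝ)) :
    ConvexOn ℝ Set.univ (fun t : Fin N → ℝ =>
      (volume ((fun c : Fin N → ℝ => ∑ i, c i • (y i + t i • θ)) '' C)).toReal) ∧
    ∀ t : Fin N → ℝ,
      (volume ((fun c : Fin N → ℝ => ∑ i, c i • (y i + (-t) i • θ)) '' C)).toReal =
      (volume ((fun c : Fin N → ℝ => ∑ i, c i • (y i + t i • θ)) '' C)).toReal :=
  stmt8_general n N C hCcpt hCconv θ y hy
end

section
/- Let M be a convex set in ℝᵐ (m ≥ 2) contained in the positive orthant [0,∞)ᵐ, and let K¹,…,Kᵐ be convex sets in ℝⁿ. Then the M-combination ⊕_M(K¹,…,Kᵐ) = { Σᵢ aᵢ x^{(i)} : x^{(i)} ∈ Kⁱ, a ∈ M } is a convex set in ℝⁿ. -/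
/-!
Given `∑ aᵢ xᵢ` and `∑ bᵢ yᵢ` in the `M`-combination, a convex combination `s • _ + t • _` of
them is, coordinatewise, `(s aᵢ) xᵢ + (t bᵢ) yᵢ`. Since the weights `s aᵢ, t bᵢ` are nonnegative
and `Kⁱ` is convex, this equals `(s aᵢ + t bᵢ) wᵢ` for some `wᵢ ∈ Kⁱ`; and `s a + t b ∈ M`.
-/

open Finset

/-- The `M`-combination `⊕_M (K¹, …, Kᵐ)` of Gardner, Hug and Weil. -/
def mCombination {𝕜 E ι : Type*} [Semiring 𝕜] [AddCommMonoid E] [Module 𝕜 E] [Fintype ι]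
    (M : Set (ι → 𝕜)) (K : ι → Set E) : Set E :=
  {z | ∃ a ∈ M, ∃ x : ι → E, (∀ i, x i ∈ K i) ∧ z = ∑ i, a i • x i}

theorem convex_mCombination {𝕜 E ι : Type*} [Field 𝕜] [LinearOrder 𝕜] [IsStrictOrderedRing 𝕜]
    [AddCommGroup E] [Module 𝕜 E] [Fintype ι] {M : Set (ι → 𝕜)} {K : ι → Set E}
    (hM : Convex 𝕜 M) (hM_nonneg : ∀ a ∈ M, ∀ i, 0 ≤ a i) (hK : ∀ i, Convex 𝕜 (K i)) :
    Convex 𝕜 (mCombination M K) := by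
  rintro _ ⟨a, ha, x, hx, rfl⟩ _ ⟨b, hb, y, hy, rfl⟩ s t hs ht hst
  have hw : ∀ i, ∃ w ∈ K i, (s * a i + t * b i) • w = (s * a i) • x i + (t * b i) • y i :=
    fun i => (hK i).exists_mem_add_smul_eq (hx i) (hy i)
      (mul_nonneg hs (hM_nonneg a ha i)) (mul_nonneg ht (hM_nonneg b hb i))
  choose w hwK hw using hw
  refine ⟨s • a + t • b, hM ha hb hs ht hst, w, hwK, ?_⟩
  simp only [Pi.add_apply, Pi.smul_apply, smul_eq_mul, hw, smul_sum, mul_smul, sum_add_distrib]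

theorem stmt15_general (n m : ℕ) (M : Set (Fin m → ℝ)) (hMconv : Convex ℝ M)
    (hMpos : ∀ a ∈ M, ∀ i, 0 ≤ a i)
    (K : Fin m → Set (EuclideanSpace ℝ (Fin n))) (hK : ∀ i, Convex ℝ (K i)) :
    Convex ℝ {z : EuclideanSpace ℝ (Fin n) | ∃ a ∈ M,
      ∃ x : Fin m → EuclideanSpace ℝ (Fin n), (∀ i, x i ∈ K i) ∧ z = ∑ i, a i • x i} :=
  convex_mCombination hMconv hMpos hK

theorem stmt15 (n m : ℕ) (hm : 2 ≤ m) (M : Set (Fin m → ℝ)) (hMconv : Convex ℝ M)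
    (hMpos : ∀ a ∈ M, ∀ i, 0 ≤ a i)
    (K : Fin m → Set (EuclideanSpace ℝ (Fin n))) (hK : ∀ i, Convex ℝ (K i)) :
    Convex ℝ {z : EuclideanSpace ℝ (Fin n) | ∃ a ∈ M,
      ∃ x : Fin m → EuclideanSpace ℝ (Fin n), (∀ i, x i ∈ K i) ∧ z = ∑ i, a i • x i} :=
  stmt15_general n m M hMconv hMpos K hK
end
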